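/- Let Σ be a finite alphabet whose size is a power of two, let Γ be a finite alphabet with |Γ| ≥ 2, let k be a positive integer, let b ∈ Γ, let φ_1, …, φ_k : Σ → F_2^{log₂|Σ|} be bijections, and let p, q : F_2^{k·log₂|Σ|} → F_2 be polynomials of total degree at most ⌊k·log₂|Σ|/100⌋, not both identically zero as functions. Let f : Σ^k → Γ be a uniformly random function, and define f' : F_2^{k·log₂|Σ|} → F_2 by f'(φ_1(σ_1), …, φ_k(σ_k)) = 0 when f(σ_1, …, σ_k) = b and f' = 1 otherwise. Then Pr_f[ p(x)·f'(x) = q(x) for every x ∈ F_2^{k·log₂|Σ|} ] ≤ (1 − 1/|Γ|)^{2^{k·log₂|Σ| − ⌊k·log₂|Σ|/100⌋}}. -/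

import Mathlib

/-!
Write `σ_x = (φ_1⁻¹(x_1), …, φ_k⁻¹(x_k))`. Where `q(x) ≠ 0` the equation forces `f(σ_x) ≠ b`; if
`q` vanishes identically, it forces `f(σ_x) = b` wherever `p(x) ≠ 0`. Either way `f` takes values
in a proper subset of `Γ` at the distinct points `σ_x`, `x` ranging over the nonzeros of a nonzero
polynomial of degree `≤ d`, which has probability at most `(1 - 1/|Γ|)^#nonzeros`.

There are at least `2^(n-d)` nonzeros (the Reed–Muller distance bound): over `𝔽₂` a function on
the cube is the sum over subsets of its Möbius transform, which vanishes above degree `d`. For `S`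
maximal with nonzero coefficient, the function sums to that coefficient on each of the
`2^(n-|S|)` cosets `W + 2^S`, so each coset contains a nonzero.
-/

open Finset

open scoped Classical

theorem MvPolynomial.card_support_le_totalDegree {σ R : Type*} [CommSemiring R]
    {p : MvPolynomial σ R} {m : σ →₀ ℕ} (hm : m ∈ p.support) : #m.support ≤ p.totalDegree :=
  calc #m.support = ∑ i ∈ m.support, 1 := card_eq_sum_ones _
    _ ≤ m.sum fun _ e => e := sum_le_sum fun i hi => Nat.one_le_iff_ne_zero.2 (by simpa using hi)
    _ ≤ p.totalDegree := MvPolynomial.le_totalDegree hm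

namespace BooleanCube

variable {ι : Type*}

theorem card_Icc_finset_cast_zmod_two (A B : Finset ι) :
    (#(Icc A B) : ZMod 2) = if A = B then 1 else 0 := by
  by_cases hAB : A ⊆ B
  · rw [card_Icc_finset hAB]
    split_ifs with h
    · simp [h]
    · have hlt : #A < #B := card_lt_card (lt_of_le_of_ne hAB h)
      rw [Nat.cast_pow, Nat.cast_ofNat, show (2 : ZMod 2) = 0 from rfl, zero_pow (by omega)]
  · rw [Icc_eq_empty hAB, if_neg (by rintro rfl; exact hAB subset_rfl)]
    rfl

def mobius (F : Finset ι → ZMod 2) (S : Finset ι) : ZMod 2 := ∑ U ∈ S.powerset, F U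

theorem sum_powerset_mobius (F : Finset ι → ZMod 2) (U : Finset ι) :
    ∑ V ∈ U.powerset, mobius F V = F U := by
  unfold mobius
  rw [sum_comm' (t' := U.powerset) (s' := fun W => Icc W U) (by
    intro V W; simp only [mem_powerset, mem_Icc]; constructor
    · rintro ⟨hV, hW⟩; exact ⟨⟨hW, hV⟩, hW.trans hV⟩
    · rintro ⟨⟨hW, hV⟩, -⟩; exact ⟨hV, hW⟩)]
  simp only [sum_const, nsmul_eq_mul, card_Icc_finset_cast_zmod_two, ite_mul, one_mul, zero_mul,
    sum_ite_eq', mem_powerset, subset_refl, if_true]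

theorem exists_mobius_ne_zero {F : Finset ι → ZMod 2} (hF : F ≠ 0) : ∃ S, mobius F S ≠ 0 := by
  by_contra! h
  exact hF (funext fun U => by rw [← sum_powerset_mobius F U, sum_eq_zero fun V _ => h V]; rfl)

theorem sum_powerset_union_eq_mobius {F : Finset ι → ZMod 2} {S W : Finset ι}
    (hS : ∀ T, S ⊂ T → mobius F T = 0) (hW : Disjoint W S) :
    ∑ Z ∈ S.powerset, F (W ∪ Z) = mobius F S := by
  have sdiff_subset_iff (T Z : Finset ι) : T \ W ⊆ Z ↔ T ⊆ W ∪ Z := sdiff_le_iff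
  rw [sum_congr rfl fun Z _ => (sum_powerset_mobius F (W ∪ Z)).symm,
    sum_comm' (t' := (W ∪ S).powerset) (s' := fun T => Icc (T \ W) S) (by
    intro Z T; simp only [mem_powerset, mem_Icc, sdiff_subset_iff]; constructor
    · rintro ⟨hZ, hT⟩; exact ⟨⟨hT, hZ⟩, hT.trans (union_subset_union_right hZ)⟩
    · rintro ⟨⟨hT, hZ⟩, -⟩; exact ⟨hZ, hT⟩)]
  simp only [sum_const, nsmul_eq_mul, card_Icc_finset_cast_zmod_two, ite_mul, one_mul, zero_mul]
  rw [sum_eq_single S]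
  · rw [if_pos hW.symm.sdiff_eq_left]
  · intro T _ hTS
    split_ifs with h
    · exact hS T (ssubset_of_subset_of_ne (h ▸ sdiff_subset) (Ne.symm hTS))
    · rfl
  · exact fun h => absurd (mem_powerset.2 subset_union_right) h

theorem two_pow_sub_le_card_ne_zero [Fintype ι] {F : Finset ι → ZMod 2} {d : ℕ}
    (hdeg : ∀ S, d < #S → mobius F S = 0) (hF : F ≠ 0) :
    2 ^ (Fintype.card ι - d) ≤ #{U | F U ≠ 0} := by
  obtain ⟨S, hS, hmax⟩ := exists_max_image {S | mobius F S ≠ 0} card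
    (by simpa [Finset.Nonempty] using exists_mobius_ne_zero hF)
  simp only [mem_filter, mem_univ, true_and] at hS hmax
  have hSd : #S ≤ d := by
    by_contra! h
    exact hS (hdeg S h)
  have hS_max : ∀ T, S ⊂ T → mobius F T = 0 := fun T hST => by
    by_contra h
    exact (card_lt_card hST).not_ge (hmax T h)
  have hsurj : Set.SurjOn (· \ S) ({U | F U ≠ 0} : Finset _) (Sᶜ.powerset : Finset _) := by
    intro W hW
    have hWS : Disjoint W S := disjoint_of_subset_left (mem_powerset.1 hW) disjoint_compl_left
    obtain ⟨Z, hZ, hFZ⟩ := exists_ne_zero_of_sum_ne_zero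
      ((sum_powerset_union_eq_mobius hS_max hWS).trans_ne hS)
    refine ⟨W ∪ Z, by simpa using hFZ, ?_⟩
    simp [union_sdiff_distrib, hWS.sdiff_eq_left, sdiff_eq_empty_iff_subset.2 (mem_powerset.1 hZ)]
  calc 2 ^ (Fintype.card ι - d) ≤ 2 ^ (Fintype.card ι - #S) :=
        Nat.pow_le_pow_right two_pos (by omega)
    _ = #Sᶜ.powerset := by rw [card_powerset, card_compl]
    _ ≤ #{U | F U ≠ 0} := card_le_card_of_surjOn _ hsurj

noncomputable def point (U : Finset ι) : ι → ZMod 2 := fun i => if i ∈ U then 1 else 0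

theorem point_injective : Function.Injective (point (ι := ι)) := by
  intro U V h
  ext i
  have := congrFun h i
  by_cases hU : i ∈ U <;> by_cases hV : i ∈ V <;> simp_all [point]

theorem point_filter_eq_one [Fintype ι] (x : ι → ZMod 2) : point {i | x i = 1} = x := by
  funext i
  simp only [point, mem_filter, mem_univ, true_and]
  generalize x i = v
  fin_cases v
  · exact if_neg zero_ne_one
  · exact if_pos rfl

theorem eval_point (p : MvPolynomial ι (ZMod 2)) (U : Finset ι) :
    MvPolynomial.eval (point U) p =
      ∑ m ∈ p.support, if m.support ⊆ U then p.coeff m else 0 := by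
  rw [MvPolynomial.eval_eq]
  refine sum_congr rfl fun m _ => ?_
  split_ifs with hmU
  · rw [prod_eq_one fun i hi => by simp [point, hmU hi], mul_one]
  · obtain ⟨i, hi, hiU⟩ := not_subset.1 hmU
    rw [prod_eq_zero hi (by simp [point, hiU, Finsupp.mem_support_iff.1 hi]), mul_zero]

theorem mobius_eval_point_eq_zero {p : MvPolynomial ι (ZMod 2)} {S : Finset ι}
    (hS : p.totalDegree < #S) : mobius (fun U => MvPolynomial.eval (point U) p) S = 0 := by
  simp only [mobius, eval_point]
  rw [sum_comm]
  refine sum_eq_zero fun m hm => ?_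
  rw [← sum_filter, sum_const, ← Icc_eq_filter_powerset, nsmul_eq_mul,
    card_Icc_finset_cast_zmod_two, if_neg, zero_mul]
  rintro rfl
  exact hS.not_ge (MvPolynomial.card_support_le_totalDegree hm)

end BooleanCube

open BooleanCube in
theorem MvPolynomial.two_pow_sub_le_card_eval_ne_zero {ι : Type*} [Fintype ι]
    {g : MvPolynomial ι (ZMod 2)} {d : ℕ} (hd : g.totalDegree ≤ d)
    (hg : ∃ x, MvPolynomial.eval x g ≠ 0) :
    2 ^ (Fintype.card ι - d) ≤ #{x | MvPolynomial.eval x g ≠ 0} := by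
  have hF : (fun U => MvPolynomial.eval (point U) g) ≠ 0 := by
    obtain ⟨x, hx⟩ := hg
    refine fun h => hx ?_
    simpa [point_filter_eq_one] using congrFun h ({i | x i = 1} : Finset ι)
  calc 2 ^ (Fintype.card ι - d)
      ≤ #{U | MvPolynomial.eval (point U) g ≠ 0} :=
        two_pow_sub_le_card_ne_zero (fun S hS => mobius_eval_point_eq_zero (hd.trans_lt hS)) hF
    _ ≤ #{x | MvPolynomial.eval x g ≠ 0} :=
        card_le_card_of_injOn point (fun U hU => by simpa using hU) point_injective.injOn

theorem card_subtype_div_card_le_of_forall_mem {D Γ : Type*} [Fintype D] [Fintype Γ]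
    [Nonempty Γ] (P : (D → Γ) → Prop) (T : Finset D) (A : Finset Γ)
    (hP : ∀ f, P f → ∀ σ ∈ T, f σ ∈ A) :
    (Nat.card {f // P f} : ℝ) / Nat.card (D → Γ) ≤ (#A / Fintype.card Γ : ℝ) ^ #T := by
  set t : D → Finset Γ := fun σ => if σ ∈ T then A else univ
  have hle : Nat.card {f // P f} ≤ #(Fintype.piFinset t) := by
    rw [Nat.card_eq_fintype_card, Fintype.card_subtype]
    refine card_le_card fun f hf => Fintype.mem_piFinset.2 fun σ => ?_
    by_cases hσ : σ ∈ T
    · simpa [t, hσ] using hP f (by simpa using hf) σ hσ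
    · simp [t, hσ]
  have hΓ : (Fintype.card Γ : ℝ) ≠ 0 := by positivity
  calc (Nat.card {f // P f} : ℝ) / Nat.card (D → Γ)
      ≤ #(Fintype.piFinset t) / (Fintype.card Γ : ℝ) ^ Fintype.card D := by
        rw [Nat.card_fun, Nat.card_eq_fintype_card (α := Γ), Nat.card_eq_fintype_card (α := D)]
        push_cast
        gcongr
    _ = ∏ σ, (#(t σ) / Fintype.card Γ : ℝ) := by
        rw [prod_div_distrib, prod_const, card_univ, Fintype.card_piFinset, Nat.cast_prod]
    _ = ∏ σ, (if σ ∈ T then (#A / Fintype.card Γ : ℝ) else 1) :=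
        prod_congr rfl fun σ _ => by by_cases hσ : σ ∈ T <;> simp [t, hσ, hΓ]
    _ = (#A / Fintype.card Γ : ℝ) ^ #T := by rw [prod_ite_mem, univ_inter, prod_const]

theorem card_subtype_div_card_le_one_sub_inv_pow {D Γ : Type*} [Fintype D] [Fintype Γ]
    [Nonempty Γ] (P : (D → Γ) → Prop) (T : Finset D) (A : Finset Γ) {N : ℕ}
    (hA : #A < Fintype.card Γ) (hT : N ≤ #T) (hP : ∀ f, P f → ∀ σ ∈ T, f σ ∈ A) :
    (Nat.card {f // P f} : ℝ) / Nat.card (D → Γ) ≤ (1 - 1 / Fintype.card Γ : ℝ) ^ N := by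
  have hΓ : (1 : ℝ) ≤ Fintype.card Γ := by exact_mod_cast Fintype.card_pos
  have hA' : (#A / Fintype.card Γ : ℝ) ≤ 1 - 1 / Fintype.card Γ := by
    rw [one_sub_div (by positivity), div_le_div_iff_of_pos_right (by positivity),
      le_sub_iff_add_le]
    exact_mod_cast hA
  calc (Nat.card {f // P f} : ℝ) / Nat.card (D → Γ) ≤ (#A / Fintype.card Γ : ℝ) ^ #T :=
        card_subtype_div_card_le_of_forall_mem P T A hP
    _ ≤ (1 - 1 / Fintype.card Γ : ℝ) ^ #T := by gcongr
    _ ≤ (1 - 1 / Fintype.card Γ : ℝ) ^ N :=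
        pow_le_pow_of_le_one (sub_nonneg.2 (div_le_one_of_le₀ hΓ (by positivity)))
          (by simp) hT

theorem card_solutions_div_card_le {X D Γ : Type*} [Fintype X] [Fintype D] [Fintype Γ]
    {e : X → D} (he : Function.Injective e) {P Q : X → ZMod 2} (hPQ : P ≠ 0 ∨ Q ≠ 0)
    (b : Γ) (hΓ : 2 ≤ Fintype.card Γ) {N : ℕ}
    (hP : P ≠ 0 → N ≤ #{x | P x ≠ 0}) (hQ : Q ≠ 0 → N ≤ #{x | Q x ≠ 0}) :
    (Nat.card {f : D → Γ // ∀ x, P x * (if f (e x) = b then 0 else 1) = Q x} : ℝ) /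
        Nat.card (D → Γ) ≤ (1 - 1 / Fintype.card Γ : ℝ) ^ N := by
  have : Nonempty Γ := ⟨b⟩
  obtain ⟨T, A, hA, hT, hforced⟩ : ∃ (T : Finset D) (A : Finset Γ), #A < Fintype.card Γ ∧
      N ≤ #T ∧ ∀ f : D → Γ, (∀ x, P x * (if f (e x) = b then 0 else 1) = Q x) →
        ∀ σ ∈ T, f σ ∈ A := by
    by_cases hQ0 : Q = 0
    · refine ⟨image e {x | P x ≠ 0}, {b}, by simp; omega,
        (card_image_of_injective _ he).symm ▸ hP (hPQ.resolve_right (not_not.2 hQ0)), ?_⟩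
      simp only [mem_image, mem_filter, mem_univ, true_and, mem_singleton]
      rintro f hf _ ⟨x, hx, rfl⟩
      by_contra hb
      simpa [hb, hQ0, hx] using hf x
    · refine ⟨image e {x | Q x ≠ 0}, {b}ᶜ, by simp [card_compl]; omega,
        (card_image_of_injective _ he).symm ▸ hQ hQ0, ?_⟩
      simp only [mem_image, mem_filter, mem_univ, true_and, mem_compl, mem_singleton]
      rintro f hf _ ⟨x, hx, rfl⟩ hb
      exact hx (by simpa [hb] using (hf x).symm)
  exact card_subtype_div_card_le_one_sub_inv_pow _ T A hA hT hforced

theorem stmt17_general (Sa Γa : Type*) [Fintype Sa] [Fintype Γa] (a k : ℕ)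
    (hΓ : 2 ≤ Fintype.card Γa)
    (b : Γa) (φ : Fin k → (Sa ≃ (Fin a → ZMod 2)))
    (p q : MvPolynomial (Fin k × Fin a) (ZMod 2))
    (hp : p.totalDegree ≤ k * a / 100) (hq : q.totalDegree ≤ k * a / 100)
    (hnz : ¬ ((∀ x : Fin k → Fin a → ZMod 2,
          MvPolynomial.eval (fun it => x it.1 it.2) p = 0) ∧
        (∀ x : Fin k → Fin a → ZMod 2,
          MvPolynomial.eval (fun it => x it.1 it.2) q = 0))) :
    (Nat.card {f : (Fin k → Sa) → Γa //
        ∀ x : Fin k → Fin a → ZMod 2,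
          MvPolynomial.eval (fun it => x it.1 it.2) p *
              (if f (fun ℓ => (φ ℓ).symm (x ℓ)) = b then 0 else 1) =
            MvPolynomial.eval (fun it => x it.1 it.2) q} : ℝ) /
      (Nat.card ((Fin k → Sa) → Γa) : ℝ) ≤
    (1 - 1 / (Fintype.card Γa : ℝ)) ^ (2 ^ (k * a - k * a / 100)) := by
  have hcount (g : MvPolynomial (Fin k × Fin a) (ZMod 2)) (hg : g.totalDegree ≤ k * a / 100)
      (hne : (fun x : Fin k → Fin a → ZMod 2 => MvPolynomial.eval (Function.uncurry x) g) ≠ 0) :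
      2 ^ (k * a - k * a / 100) ≤
        #{x : Fin k → Fin a → ZMod 2 | MvPolynomial.eval (fun it => x it.1 it.2) g ≠ 0} := by
    obtain ⟨x, hx⟩ := Function.ne_iff.1 hne
    have h := MvPolynomial.two_pow_sub_le_card_eval_ne_zero hg ⟨_, hx⟩
    rw [Fintype.card_prod, Fintype.card_fin, Fintype.card_fin] at h
    exact h.trans_eq (card_equiv (Equiv.curry _ _ _) (by simp))
  refine card_solutions_div_card_le (Equiv.piCongrRight fun ℓ => (φ ℓ).symm).injective ?_ b hΓ
    (hcount p hp) (hcount q hq)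
  simpa only [ne_eq, funext_iff, Pi.zero_apply, not_and_or] using hnz

/-- Let `|Σ| = 2^a` (so `a = log₂|Σ|`), `|Γ| ≥ 2`, `k ≥ 1`, `b ∈ Γ`,
`φ_1, …, φ_k : Σ ≃ F_2^a` bijections, and let `p, q` be polynomials over `F_2` in
the `k·a` variables (indexed by `Fin k × Fin a`) of total degree at most
`⌊k·a/100⌋`, not both identically zero as functions.  For a uniformly random
`f : Σ^k → Γ`, define `f' : F_2^{k·a} → F_2` by `f'(φ_1(σ_1), …, φ_k(σ_k)) = 0`
iff `f(σ_1, …, σ_k) = b` (and `1` otherwise).  Then the probability that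
`p(x)·f'(x) = q(x)` for every `x` is at most
`(1 − 1/|Γ|)^{2^{k·a − ⌊k·a/100⌋}}`. -/
theorem stmt17 (Sa Γa : Type*) [Fintype Sa] [Fintype Γa] (a k : ℕ) (hk : 0 < k)
    (hSa : Fintype.card Sa = 2 ^ a) (hΓ : 2 ≤ Fintype.card Γa)
    (b : Γa) (φ : Fin k → (Sa ≃ (Fin a → ZMod 2)))
    (p q : MvPolynomial (Fin k × Fin a) (ZMod 2))
    (hp : p.totalDegree ≤ k * a / 100) (hq : q.totalDegree ≤ k * a / 100)
    (hnz : ¬ ((∀ x : Fin k → Fin a → ZMod 2,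
          MvPolynomial.eval (fun it => x it.1 it.2) p = 0) ∧
        (∀ x : Fin k → Fin a → ZMod 2,
          MvPolynomial.eval (fun it => x it.1 it.2) q = 0))) :
    (Nat.card {f : (Fin k → Sa) → Γa //
        ∀ x : Fin k → Fin a → ZMod 2,
          MvPolynomial.eval (fun it => x it.1 it.2) p *
              (if f (fun ℓ => (φ ℓ).symm (x ℓ)) = b then 0 else 1) =
            MvPolynomial.eval (fun it => x it.1 it.2) q} : ℝ) /
      (Nat.card ((Fin k → Sa) → Γa) : ℝ) ≤
    (1 - 1 / (Fintype.card Γa : ℝ)) ^ (2 ^ (k * a - k * a / 100)) :=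
  stmt17_general Sa Γa a k hΓ b φ p q hp hq hnz
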